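/- arXiv:1904.12900 — 7 statements merged into one kernel-verified Lean document; each statement's English description precedes it below -/
import Mathlib

section
/- Define a(t) = 1/(2 + 0.5^(⌊t⌋-2)) and h(t) = ⌊t⌋ - 0.5^⌊t⌋·(1 - {t}) for t ≥ 1, where ⌊t⌋ is the floor and {t} = t - ⌊t⌋ the fractional part. Then x(t) = (1 + 0.5^⌊t⌋)·(1 - {t}) satisfies x(t+1) - x(t) + a(t)·x(h(t)) = 0 for all t ≥ 1. Moreover a(t) ≥ 1/4 for all t ≥ 1, and x(n) > 1 for every integer n ≥ 1, so x does not tend to 0. -/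
/-!
Write `p = 0.5^⌊t⌋` and `f = {t}`. For `t ≥ 0` the delay `s = p·(1 - f)` lies in `(0, 1]`, so
`h(t) = ⌊t⌋ - s` has floor `⌊t⌋ - 1` and fractional part `1 - s`; hence `x(h(t)) = (1 + 2p)·s`.
Since `a(t) = 1/(2 + 4p)`, the delayed term is `p(1 - f)/2`, which is exactly `x(t) - x(t+1)`.
-/

section FloorRing

variable {R : Type*} [CommRing R] [LinearOrder R] [IsStrictOrderedRing R] [FloorRing R]

theorem Int.floor_intCast_sub_of_mem_Ioc {n : ℤ} {s : R} (hs : s ∈ Set.Ioc 0 1) :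
    ⌊(n : R) - s⌋ = n - 1 := by
  rw [Int.floor_eq_iff]
  push_cast
  constructor <;> linarith [hs.1, hs.2]

theorem Int.fract_intCast_sub_of_mem_Ioc {n : ℤ} {s : R} (hs : s ∈ Set.Ioc 0 1) :
    Int.fract ((n : R) - s) = 1 - s := by
  rw [Int.fract, Int.floor_intCast_sub_of_mem_Ioc hs]
  push_cast
  ring

end FloorRing

theorem half_zpow_mul_one_sub_fract_mem_Ioc {n : ℤ} (hn : 0 ≤ n) (t : ℝ) :
    (0.5 : ℝ) ^ n * (1 - Int.fract t) ∈ Set.Ioc 0 1 := by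
  have hpos : (0 : ℝ) < (0.5 : ℝ) ^ n := zpow_pos (by norm_num) n
  have hle : (0.5 : ℝ) ^ n ≤ 1 := zpow_le_one₀ (by norm_num) (by norm_num) hn
  have hf : 0 < 1 - Int.fract t := sub_pos.mpr (Int.fract_lt_one t)
  exact ⟨mul_pos hpos hf, mul_le_one₀ hle hf.le (by linarith [Int.fract_nonneg t])⟩

theorem delay_equation_identity (n : ℤ) (s : ℝ) :
    (1 + (0.5 : ℝ) ^ (n + 1)) * s - (1 + (0.5 : ℝ) ^ n) * s
      + 1 / (2 + (0.5 : ℝ) ^ (n - 2)) * ((1 + (0.5 : ℝ) ^ (n - 1)) * ((0.5 : ℝ) ^ n * s)) = 0 := by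
  have h2 : (0.5 : ℝ) ^ (2 : ℤ) = 1 / 4 := by norm_num
  rw [zpow_add₀ (by norm_num), zpow_sub₀ (by norm_num), zpow_sub₀ (by norm_num), h2]
  have hp : (0 : ℝ) < (0.5 : ℝ) ^ n := zpow_pos (by norm_num) n
  field_simp
  ring

/-- Example 1: with `a(t) = 1/(2 + 0.5^(⌊t⌋-2))` and
`h(t) = ⌊t⌋ - 0.5^⌊t⌋·(1 - {t})`, the function
`x(t) = (1 + 0.5^⌊t⌋)·(1 - {t})` solves `x(t+1) - x(t) + a(t)·x(h(t)) = 0`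
for `t ≥ 1`; moreover `a(t) ≥ 1/4` and `x(n) > 1` for integers `n ≥ 1`. -/
theorem stmt_0 (a h x : ℝ → ℝ)
    (ha : ∀ t : ℝ, a t = 1 / (2 + (0.5 : ℝ) ^ (⌊t⌋ - 2)))
    (hh : ∀ t : ℝ, h t = (⌊t⌋ : ℝ) - (0.5 : ℝ) ^ ⌊t⌋ * (1 - Int.fract t))
    (hx : ∀ t : ℝ, x t = (1 + (0.5 : ℝ) ^ ⌊t⌋) * (1 - Int.fract t)) :
    (∀ t : ℝ, 1 ≤ t → x (t + 1) - x t + a t * x (h t) = 0) ∧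
    (∀ t : ℝ, 1 ≤ t → (1 : ℝ) / 4 ≤ a t) ∧
    (∀ n : ℤ, 1 ≤ n → 1 < x n) := by
  refine ⟨fun t ht => ?_, fun t ht => ?_, fun n hn => ?_⟩
  · have hs := half_zpow_mul_one_sub_fract_mem_Ioc
      (Int.floor_nonneg.mpr (by linarith : (0 : ℝ) ≤ t)) t
    rw [hx, hx, hx, ha, hh, Int.floor_add_one, Int.fract_add_one,
      Int.floor_intCast_sub_of_mem_Ioc hs, Int.fract_intCast_sub_of_mem_Ioc hs, sub_sub_cancel]
    exact delay_equation_identity _ _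
  · have hfloor : 1 ≤ ⌊t⌋ := Int.le_floor.mpr (by exact_mod_cast ht)
    have hle : (0.5 : ℝ) ^ (⌊t⌋ - 2) ≤ (0.5 : ℝ) ^ (-1 : ℤ) :=
      zpow_le_zpow_right_of_le_one₀ (by norm_num) (by norm_num) (by omega)
    rw [ha, show (1 : ℝ) / 4 = 1 / (2 + (0.5 : ℝ) ^ (-1 : ℤ)) by norm_num]
    exact one_div_le_one_div_of_le (by positivity) (by linarith)
  · rw [hx, Int.floor_intCast, Int.fract_intCast, sub_zero, mul_one, lt_add_iff_pos_right]
    exact zpow_pos (by norm_num) n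
end

section
/- Fix a = 1/4 and let n ∈ ℕ be arbitrary. Define h(t) = ⌊t⌋ - n - 2^(-n)·(1 - {t}), so that h(t) < t - n for all t. Then x(t) = 2^(-⌊t⌋)·(1 - {t}) satisfies x(t+1) - x(t) + (1/4)·x(h(t)) = 0 for all t. Hence for the fixed coefficient 1/4 and arbitrarily large delay bound n, a nonnegative (non-oscillatory) solution exists. -/
/-! The solution `x` halves over each unit interval, so `x (t + 1) = x t / 2`. The delay `h t`
lies `n + 1` unit intervals before `t`, at distance `2⁻ⁿ (1 - {t})` below the integer
`⌊t⌋ - n`; since `x` vanishes linearly at the right end of each interval, this gives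
`x (h t) = 2 ^ (n + 1) · 2⁻ⁿ · x t = 2 x t`, and `1/2 - 1 + (1/4) · 2 = 0`. -/

namespace Int

variable {R : Type*} [Ring R] [LinearOrder R] [IsStrictOrderedRing R] [FloorRing R]

theorem floor_intCast_sub_of_mem_Ioc_s2 {m : ℤ} {c : R}
    (hc : c ∈ Set.Ioc 0 1) : ⌊(m : R) - c⌋ = m - 1 := by
  rw [floor_eq_iff]
  push_cast
  rw [sub_add_cancel]
  exact ⟨sub_le_sub_left hc.2 _, sub_lt_self _ hc.1⟩

theorem fract_intCast_sub_of_mem_Ioc_s2 {m : ℤ} {c : R}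
    (hc : c ∈ Set.Ioc 0 1) : fract ((m : R) - c) = 1 - c := by
  rw [fract, floor_intCast_sub_of_mem_Ioc_s2 hc]
  push_cast
  abel

theorem mul_one_sub_fract_mem_Ioc {r : R} (hr : r ∈ Set.Ioc 0 1)
    (a : R) : r * (1 - fract a) ∈ Set.Ioc 0 1 := by
  have h₀ : 0 < 1 - fract a := sub_pos.2 (fract_lt_one a)
  have h₁ : 1 - fract a ≤ 1 := sub_le_self 1 (fract_nonneg a)
  exact ⟨mul_pos hr.1 h₀, mul_le_one₀ hr.2 h₀.le h₁⟩

end Int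

open Int

section Sawtooth

variable {K : Type*} [Field K] [LinearOrder K] [IsStrictOrderedRing K] [FloorRing K] {b : K}

theorem zpow_neg_floor_mul_one_sub_fract_add_one (hb : b ≠ 0) (t : K) :
    b ^ (-⌊t + 1⌋) * (1 - fract (t + 1)) = b⁻¹ * (b ^ (-⌊t⌋) * (1 - fract t)) := by
  rw [floor_add_one, fract_add_one, neg_add, zpow_add₀ hb, zpow_neg_one]
  ring

theorem zpow_neg_floor_mul_one_sub_fract_intCast_sub (hb : b ≠ 0) {m : ℤ} {c : K}
    (hc : c ∈ Set.Ioc 0 1) :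
    b ^ (-⌊(m : K) - c⌋) * (1 - fract ((m : K) - c)) = b * b ^ (-m) * c := by
  rw [floor_intCast_sub_of_mem_Ioc_s2 hc, fract_intCast_sub_of_mem_Ioc_s2 hc, neg_sub,
    sub_eq_add_neg, zpow_add₀ hb, zpow_one]
  ring

end Sawtooth

/-- Theorem 1 (second part): for the fixed coefficient `a = 1/4` and any
`n ∈ ℕ`, with `h(t) = ⌊t⌋ - n - 2^(-n)·(1-{t})` one has `h(t) < t - n`
and `x(t) = 2^(-⌊t⌋)·(1-{t})` is a nonnegative solution of
`x(t+1) - x(t) + (1/4)·x(h(t)) = 0`. -/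
theorem stmt_2 (n : ℕ) (h x : ℝ → ℝ)
    (hh : ∀ t : ℝ, h t = (⌊t⌋ : ℝ) - n - (2 : ℝ) ^ (-(n : ℤ)) * (1 - Int.fract t))
    (hx : ∀ t : ℝ, x t = (2 : ℝ) ^ (-⌊t⌋) * (1 - Int.fract t)) :
    (∀ t : ℝ, h t < t - n) ∧
    (∀ t : ℝ, x (t + 1) - x t + (1 / 4 : ℝ) * x (h t) = 0) ∧
    (∀ t : ℝ, 0 ≤ x t) := by
  have hpow : (2 : ℝ) ^ (-(n : ℤ)) ∈ Set.Ioc 0 1 :=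
    ⟨by positivity, zpow_le_one_of_nonpos₀ one_le_two (by simp)⟩
  have hc (t : ℝ) := mul_one_sub_fract_mem_Ioc hpow t
  have hh' (t : ℝ) : h t = ((⌊t⌋ - n : ℤ) : ℝ) - 2 ^ (-(n : ℤ)) * (1 - fract t) := by
    push_cast
    exact hh t
  refine ⟨fun t => ?_, fun t => ?_, fun t => ?_⟩
  · linarith [hh t, floor_le t, (hc t).1]
  · have hstep := zpow_neg_floor_mul_one_sub_fract_add_one two_ne_zero t
    have hdelay := zpow_neg_floor_mul_one_sub_fract_intCast_sub two_ne_zero (m := ⌊t⌋ - n) (hc t)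
    have hcancel : (2 : ℝ) ^ (-(⌊t⌋ - n : ℤ)) * 2 ^ (-(n : ℤ)) = 2 ^ (-⌊t⌋) := by
      rw [← zpow_add₀ two_ne_zero]
      ring_nf
    rw [hx, hx, hx, hh', hstep, hdelay]
    linear_combination (1 / 2 * (1 - fract t)) * hcancel
  · rw [hx]
    exact mul_nonneg (by positivity) (sub_nonneg.2 (fract_lt_one t).le)
end

section
/- The discrete delay difference equation y(n+1) - y(n) + q·y(n-1) = 0 with constant q > 1/4 has no eventually positive solution; i.e., every solution oscillates. -/
/-! Along a positive solution the ratios `r n = y (n + 1) / y n` satisfy `r (n + 1) = 1 - q / r n`.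
Once `y` is decreasing (`r n ≤ 1`), the identity
`r (r - r') = (r - 1/2)² + (q - 1/4)(1 - r)` shows `r' ≤ r - (q - 1/4)`, so for `q > 1/4` the
ratios drop by a fixed amount at every step and eventually become negative. -/

section OrderedField

variable {K : Type*} [Field K] [LinearOrder K] [IsStrictOrderedRing K]

lemma div_le_div_sub_of_sub_add_mul_eq_zero {q a b c : K} (hq : 1 / 4 ≤ q) (ha : 0 < a)
    (hb : 0 < b) (hba : b ≤ a) (hrec : c - b + q * a = 0) :
    c / b ≤ b / a - (q - 1 / 4) := by
  have hc : c = b - q * a := by linarith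
  have hgap : b / a - (q - 1 / 4) - c / b =
      ((b - a / 2) ^ 2 + (q - 1 / 4) * (a * (a - b))) / (a * b) := by
    rw [hc]; field_simp; ring
  refine sub_nonneg.1 (hgap ▸ div_nonneg ?_ (mul_pos ha hb).le)
  exact add_nonneg (sq_nonneg _)
    (mul_nonneg (sub_nonneg.2 hq) (mul_nonneg ha.le (sub_nonneg.2 hba)))

lemma exists_neg_of_le_sub [Archimedean K] {u : ℕ → K} {ε : K} (hε : 0 < ε)
    (h : ∀ k, u (k + 1) ≤ u k - ε) :
    ∃ k, u k < 0 := by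
  have hle : ∀ k : ℕ, u k ≤ u 0 - k * ε := by
    intro k
    induction k with
    | zero => simp
    | succ k ih => push_cast; linarith [h k]
  obtain ⟨k, hk⟩ := exists_nat_gt (u 0 / ε)
  exact ⟨k, (hle k).trans_lt (by linarith [(div_lt_iff₀ hε).1 hk])⟩

end OrderedField

/-- The discrete equation `y(n+1) - y(n) + q·y(n-1) = 0` with constant
`q > 1/4` has no eventually positive solution. -/
theorem stmt_6 (q : ℝ) (hq : 1 / 4 < q) :
    ¬ ∃ y : ℤ → ℝ, (∃ N : ℤ, ∀ n : ℤ, N ≤ n → 0 < y n) ∧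
      (∀ n : ℤ, y (n + 1) - y n + q * y (n - 1) = 0) := by
  rintro ⟨y, ⟨N, hpos⟩, hrec⟩
  have hratio : ∀ k : ℕ, y (N + k + 3) / y (N + k + 2) ≤
      y (N + k + 2) / y (N + k + 1) - (q - 1 / 4) := fun k => by
    have hrec₁ := hrec (N + k + 1)
    have hrec₂ := hrec (N + k + 2)
    rw [show N + k + 1 + 1 = N + k + 2 by ring, show N + k + 1 - 1 = N + k by ring] at hrec₁
    rw [show N + k + 2 + 1 = N + k + 3 by ring, show N + k + 2 - 1 = N + k + 1 by ring] at hrec₂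
    have hdecr : y (N + k + 2) ≤ y (N + k + 1) := by nlinarith [hpos (N + k) (by omega)]
    exact div_le_div_sub_of_sub_add_mul_eq_zero hq.le (hpos _ (by omega)) (hpos _ (by omega))
      hdecr hrec₂
  obtain ⟨k, hk⟩ := exists_neg_of_le_sub (u := fun k : ℕ => y (N + k + 2) / y (N + k + 1))
    (sub_pos.2 hq) fun k => by
      simpa only [Nat.cast_succ, show N + (k + 1) + 2 = N + k + 3 by ring,
        show N + (k + 1) + 1 = N + k + 2 by ring] using hratio k
  exact hk.not_ge (div_pos (hpos _ (by omega)) (hpos _ (by omega))).le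
end

section
/- Let a_k : ℝ → ℝ≥0 and h_k(t) ≤ t, k = 1,…,m. Define a_k⁺(n) = sup_{[n,n+1)} a_k, a_k⁻(n) = inf_{[n,n+1)} a_k, h_k⁺(n) = sup_{[n,n+1)} ⌊h_k⌋, h_k⁻(n) = inf_{[n,n+1)} ⌊h_k⌋. Suppose there exist positive non-increasing sequences u(n), V(n), n ∈ ℤ, with u(n) ≤ V(n) for n ≥ 0, u(n+1) ≤ u(n) - Σ_k a_k⁺(n)·V(h_k⁻(n)) and V(n+1) ≥ V(n) - Σ_k a_k⁻(n)·u(h_k⁺(n)) for n ≥ 0. Then the solution x of x(t+1) - x(t) + Σ_k a_k(t)·x(h_k(t)) = 0 with initial function x(t) = u(⌊t⌋) = V(⌊t⌋) for t < 1 (where u(n) = V(n) for n ≤ 0) satisfies u(n) ≤ x(t) ≤ V(n) for t ∈ [n,n+1), n ≥ 0; in particular x is a positive solution with positive infimum on every bounded interval. -/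
/-!
Induction on `n`: if `u ⌊r⌋ ≤ x r ≤ V ⌊r⌋` for all `r < n + 1`, then for `s ∈ [n, n+1)` every
delayed value `x (h k s)` is already sandwiched, and `⌊h k s⌋ ∈ [h_k⁻(n), h_k⁺(n)]`. Since `u`
and `V` are non-increasing, the delay term `Σ a_k(s) x(h_k(s))` lies between
`Σ a_k⁻(n) u(h_k⁺(n))` and `Σ a_k⁺(n) V(h_k⁻(n))`, so the recurrence
`x(s+1) = x(s) - Σ a_k(s) x(h_k(s))` together with the two defining inequalities of `u` and `V`
sandwiches `x (s + 1)` between `u (n+1)` and `V (n+1)`.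
-/

open Finset

def Sandwiched (u V : ℤ → ℝ) (x : ℝ → ℝ) (t : ℝ) : Prop :=
  u ⌊t⌋ ≤ x t ∧ x t ≤ V ⌊t⌋

section Bounds

variable {u V : ℤ → ℝ} {x α g : ℝ → ℝ} {I : Set ℝ} {s : ℝ}

lemma lowerBound_mul_le_mul_delayed (hu : Antitone u) (hu_pos : ∀ n, 0 < u n) {aL : ℝ} {pH : ℤ}
    (haL : aL ∈ lowerBounds (α '' I)) (hpH : pH ∈ upperBounds {p : ℤ | ∃ s ∈ I, ⌊g s⌋ = p})
    (hs : s ∈ I) (hα : 0 ≤ α s) (hx : u ⌊g s⌋ ≤ x (g s)) :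
    aL * u pH ≤ α s * x (g s) :=
  mul_le_mul (haL ⟨s, hs, rfl⟩) ((hu (hpH ⟨s, hs, rfl⟩)).trans hx) (hu_pos _).le hα

lemma mul_delayed_le_upperBound_mul (hV : Antitone V) {aH : ℝ} {pL : ℤ}
    (haH : aH ∈ upperBounds (α '' I)) (hpL : pL ∈ lowerBounds {p : ℤ | ∃ s ∈ I, ⌊g s⌋ = p})
    (hs : s ∈ I) (hα : 0 ≤ α s) (hx₀ : 0 ≤ x (g s)) (hx : x (g s) ≤ V ⌊g s⌋) :
    α s * x (g s) ≤ aH * V pL :=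
  mul_le_mul (haH ⟨s, hs, rfl⟩) (hx.trans (hV (hpL ⟨s, hs, rfl⟩))) hx₀
    (hα.trans (haH ⟨s, hs, rfl⟩))

end Bounds

lemma sandwiched_add_one {m : ℕ} {a h : Fin m → ℝ → ℝ} {x : ℝ → ℝ} {u V : ℤ → ℝ}
    (hu : Antitone u) (hV : Antitone V) (hu_pos : ∀ n, 0 < u n) {n : ℕ}
    {aL aH : Fin m → ℝ} {hL hH : Fin m → ℤ}
    (haL : ∀ k, aL k ∈ lowerBounds (a k '' Set.Ico (n : ℝ) (n + 1)))
    (haH : ∀ k, aH k ∈ upperBounds (a k '' Set.Ico (n : ℝ) (n + 1)))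
    (hhL : ∀ k, hL k ∈ lowerBounds {p : ℤ | ∃ s ∈ Set.Ico (n : ℝ) (n + 1), ⌊h k s⌋ = p})
    (hhH : ∀ k, hH k ∈ upperBounds {p : ℤ | ∃ s ∈ Set.Ico (n : ℝ) (n + 1), ⌊h k s⌋ = p})
    (hu_step : u (n + 1) ≤ u n - ∑ k, aH k * V (hL k))
    (hV_step : V n - ∑ k, aL k * u (hH k) ≤ V (n + 1))
    {s : ℝ} (hs : s ∈ Set.Ico (n : ℝ) (n + 1)) (ha : ∀ k, 0 ≤ a k s) (hht : ∀ k, h k s ≤ s)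
    (hrec : x (s + 1) - x s + ∑ k, a k s * x (h k s) = 0)
    (hx : ∀ r : ℝ, r < n + 1 → Sandwiched u V x r) :
    Sandwiched u V x (s + 1) := by
  have hfloor : ⌊s⌋ = n := Int.floor_eq_iff.2 (by exact_mod_cast hs)
  have hdelay (k : Fin m) : Sandwiched u V x (h k s) := hx _ ((hht k).trans_lt hs.2)
  have hlower : ∑ k, aL k * u (hH k) ≤ ∑ k, a k s * x (h k s) :=
    sum_le_sum fun k _ ↦
      lowerBound_mul_le_mul_delayed hu hu_pos (haL k) (hhH k) hs (ha k) (hdelay k).1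
  have hupper : ∑ k, a k s * x (h k s) ≤ ∑ k, aH k * V (hL k) :=
    sum_le_sum fun k _ ↦ mul_delayed_le_upperBound_mul hV (haH k) (hhL k) hs (ha k)
      ((hu_pos _).le.trans (hdelay k).1) (hdelay k).2
  have hxs := hx s hs.2
  rw [Sandwiched, hfloor] at hxs
  rw [Sandwiched, Int.floor_add_one, hfloor]
  constructor <;> linarith

lemma sandwiched_of_initial {m : ℕ} (a h : Fin m → ℝ → ℝ) (x : ℝ → ℝ) {u V : ℤ → ℝ}
    (ha : ∀ k t, 0 ≤ a k t) (hht : ∀ k (t : ℝ), h k t ≤ t)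
    (aH aL : Fin m → ℕ → ℝ) (hL hH : Fin m → ℕ → ℤ)
    (haH : ∀ k (n : ℕ), aH k n ∈ upperBounds (a k '' Set.Ico (n : ℝ) ((n : ℝ) + 1)))
    (haL : ∀ k (n : ℕ), aL k n ∈ lowerBounds (a k '' Set.Ico (n : ℝ) ((n : ℝ) + 1)))
    (hhL : ∀ k (n : ℕ),
      hL k n ∈ lowerBounds {p : ℤ | ∃ s ∈ Set.Ico (n : ℝ) ((n : ℝ) + 1), ⌊h k s⌋ = p})
    (hhH : ∀ k (n : ℕ),
      hH k n ∈ upperBounds {p : ℤ | ∃ s ∈ Set.Ico (n : ℝ) ((n : ℝ) + 1), ⌊h k s⌋ = p})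
    (hu_pos : ∀ n : ℤ, 0 < u n) (hu : Antitone u) (hV : Antitone V)
    (huV0 : ∀ n : ℤ, n ≤ 0 → u n = V n)
    (hu_step : ∀ n : ℕ, u (n + 1) ≤ u n - ∑ k, aH k n * V (hL k n))
    (hV_step : ∀ n : ℕ, V n - ∑ k, aL k n * u (hH k n) ≤ V (n + 1))
    (hinit : ∀ t : ℝ, t < 1 → x t = u ⌊t⌋)
    (heq : ∀ t : ℝ, 0 ≤ t → x (t + 1) - x t + ∑ k, a k t * x (h k t) = 0) (t : ℝ) :
    Sandwiched u V x t := by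
  suffices hlt : ∀ n : ℕ, ∀ r : ℝ, r < n + 1 → Sandwiched u V x r by
    obtain ⟨n, hn⟩ := exists_nat_gt t
    exact hlt n t (by linarith)
  intro n
  induction n with
  | zero =>
    intro r hr
    rw [Nat.cast_zero, zero_add] at hr
    have hfloor : ⌊r⌋ ≤ 0 := Int.lt_add_one_iff.1 (Int.floor_lt.2 (by simpa using hr))
    rw [Sandwiched, hinit r hr, ← huV0 _ hfloor]
    exact ⟨le_rfl, le_rfl⟩
  | succ n ih =>
    intro r hr
    rcases lt_or_ge r (n + 1) with hrn | hrn
    · exact ih r hrn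
    · have hs : r - 1 ∈ Set.Ico (n : ℝ) (n + 1) := ⟨by linarith, by push_cast at hr; linarith⟩
      have hs₀ : 0 ≤ r - 1 := (Nat.cast_nonneg n).trans hs.1
      simpa using sandwiched_add_one hu hV hu_pos (haL · n) (haH · n) (hhL · n) (hhH · n)
        (hu_step n) (hV_step n) hs (ha · _) (hht · _) (heq _ hs₀) ih

theorem stmt_7_general (m : ℕ) (a h : Fin m → ℝ → ℝ) (x : ℝ → ℝ) (u V : ℤ → ℝ)
    (ha : ∀ k t, 0 ≤ a k t) (hht : ∀ k (t : ℝ), h k t ≤ t)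
    (aH aL : Fin m → ℕ → ℝ) (hL hH : Fin m → ℕ → ℤ)
    (haH : ∀ k (n : ℕ), IsLUB (a k '' Set.Ico (n : ℝ) ((n : ℝ) + 1)) (aH k n))
    (haL : ∀ k (n : ℕ), IsGLB (a k '' Set.Ico (n : ℝ) ((n : ℝ) + 1)) (aL k n))
    (hhL : ∀ k (n : ℕ),
      IsLeast {p : ℤ | ∃ s ∈ Set.Ico (n : ℝ) ((n : ℝ) + 1), ⌊h k s⌋ = p} (hL k n))
    (hhH : ∀ k (n : ℕ),
      IsGreatest {p : ℤ | ∃ s ∈ Set.Ico (n : ℝ) ((n : ℝ) + 1), ⌊h k s⌋ = p} (hH k n))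
    (hu_pos : ∀ n : ℤ, 0 < u n)
    (hu_mono : ∀ n : ℤ, u (n + 1) ≤ u n) (hV_mono : ∀ n : ℤ, V (n + 1) ≤ V n)
    (huV0 : ∀ n : ℤ, n ≤ 0 → u n = V n)
    (h16 : ∀ n : ℕ, u (n + 1) ≤ u n - ∑ k, aH k n * V (hL k n))
    (h17 : ∀ n : ℕ, V n - ∑ k, aL k n * u (hH k n) ≤ V (n + 1))
    (hinit : ∀ t : ℝ, t < 1 → x t = u ⌊t⌋)
    (heq : ∀ t : ℝ, 0 ≤ t → x (t + 1) - x t + ∑ k, a k t * x (h k t) = 0) :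
    (∀ n : ℕ, ∀ t ∈ Set.Ico (n : ℝ) ((n : ℝ) + 1), u n ≤ x t ∧ x t ≤ V n) ∧
    (∀ t : ℝ, 0 < x t) ∧
    (∀ c d : ℝ, c < d → ∃ ε > 0, ∀ t ∈ Set.Icc c d, ε ≤ x t) := by
  have hu : Antitone u := antitone_int_of_succ_le hu_mono
  have hx (t : ℝ) : Sandwiched u V x t :=
    sandwiched_of_initial a h x ha hht aH aL hL hH (fun k n ↦ (haH k n).1) (fun k n ↦ (haL k n).1)
      (fun k n ↦ (hhL k n).2) (fun k n ↦ (hhH k n).2) hu_pos hu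
      (antitone_int_of_succ_le hV_mono) huV0 h16 h17 hinit heq t
  refine ⟨fun n t ht ↦ ?_, fun t ↦ (hu_pos _).trans_le (hx t).1,
    fun c d _ ↦ ⟨u ⌊d⌋, hu_pos _, fun t ht ↦ (hu (Int.floor_mono ht.2)).trans (hx t).1⟩⟩
  have hfloor : ⌊t⌋ = n := Int.floor_eq_iff.2 (by exact_mod_cast ht)
  simpa only [Sandwiched, hfloor] using hx t

/-- Theorem 3 (sandwich existence): if positive non-increasing sequences
`u ≤ V` satisfy `u(n+1) ≤ u(n) - Σ_k a_k⁺(n)·V(h_k⁻(n))` and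
`V(n+1) ≥ V(n) - Σ_k a_k⁻(n)·u(h_k⁺(n))`, then the solution of
`x(t+1) - x(t) + Σ_k a_k(t)·x(h_k(t)) = 0` with initial function
`x(t) = u(⌊t⌋) = V(⌊t⌋)`, `t < 1`, satisfies `u(n) ≤ x(t) ≤ V(n)` on
`[n,n+1)`; in particular it is positive with positive infimum on every
bounded interval. -/
theorem stmt_7 (m : ℕ) (a h : Fin m → ℝ → ℝ) (x : ℝ → ℝ) (u V : ℤ → ℝ)
    (ha : ∀ k t, 0 ≤ a k t) (hht : ∀ k (t : ℝ), h k t ≤ t)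
    (aH aL : Fin m → ℕ → ℝ) (hL hH : Fin m → ℕ → ℤ)
    (haH : ∀ k (n : ℕ), IsLUB (a k '' Set.Ico (n : ℝ) ((n : ℝ) + 1)) (aH k n))
    (haL : ∀ k (n : ℕ), IsGLB (a k '' Set.Ico (n : ℝ) ((n : ℝ) + 1)) (aL k n))
    (hhL : ∀ k (n : ℕ),
      IsLeast {p : ℤ | ∃ s ∈ Set.Ico (n : ℝ) ((n : ℝ) + 1), ⌊h k s⌋ = p} (hL k n))
    (hhH : ∀ k (n : ℕ),
      IsGreatest {p : ℤ | ∃ s ∈ Set.Ico (n : ℝ) ((n : ℝ) + 1), ⌊h k s⌋ = p} (hH k n))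
    (hu_pos : ∀ n : ℤ, 0 < u n) (hV_pos : ∀ n : ℤ, 0 < V n)
    (hu_mono : ∀ n : ℤ, u (n + 1) ≤ u n) (hV_mono : ∀ n : ℤ, V (n + 1) ≤ V n)
    (huV : ∀ n : ℤ, 0 ≤ n → u n ≤ V n)
    (huV0 : ∀ n : ℤ, n ≤ 0 → u n = V n)
    (h16 : ∀ n : ℕ, u (n + 1) ≤ u n - ∑ k, aH k n * V (hL k n))
    (h17 : ∀ n : ℕ, V n - ∑ k, aL k n * u (hH k n) ≤ V (n + 1))
    (hinit : ∀ t : ℝ, t < 1 → x t = u ⌊t⌋)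
    (heq : ∀ t : ℝ, 0 ≤ t → x (t + 1) - x t + ∑ k, a k t * x (h k t) = 0) :
    (∀ n : ℕ, ∀ t ∈ Set.Ico (n : ℝ) ((n : ℝ) + 1), u n ≤ x t ∧ x t ≤ V n) ∧
    (∀ t : ℝ, 0 < x t) ∧
    (∀ c d : ℝ, c < d → ∃ ε > 0, ∀ t ∈ Set.Icc c d, ε ≤ x t) :=
  stmt_7_general m a h x u V ha hht aH aL hL hH haH haL hhL hhH hu_pos hu_mono hV_mono huV0 h16 h17
    hinit heq
end

section
/- Consider the equation x(t+1) - x(t) + 0.5^(⌊t⌋+2)·x(⌊t⌋ - 1 - 0.8·cos t) = 0. With V(n) = 1 and u(n) = 0.5 + 0.5^(n+1) for n ≥ 0 (and u(n) = V(n) = 1 for n < 0), the pair (u,V) satisfies: u, V positive non-increasing, u(n) ≤ V(n), u(n) - u(n+1) = 0.5^(n+2) ≥ a⁺(n)·V(h⁻(n)) and V(n) - V(n+1) = 0 ≤ a⁻(n)·u(h⁺(n)), where a⁺(n) = a⁻(n) = 0.5^(n+2), h⁻(n) = n-2, h⁺(n) = n. Consequently this equation has a positive solution x with u(n) ≤ x(t)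 ≤ V(n) on [n,n+1). -/
/-!
Method of steps for `x (t + 1) - x t + a t * x (h t) = 0` with a retarded argument,
`⌊h t⌋ ≤ ⌊t⌋`: prescribe `x` on `(-∞, 1)` and let the equation define `x` on `[n + 1, n + 2)`
from its values on `(-∞, n + 1)`. If `0 ≤ a` and the integer sequences `u`, `V` satisfy
`u (n + 1) ≤ u n - a t * V ⌊h t⌋` and `V n - a t * u ⌊h t⌋ ≤ V (n + 1)` for `t ∈ [n, n + 1)`,
then the bounds `u ⌊t⌋ ≤ x t ≤ V ⌊t⌋` propagate from one unit interval to the next. For the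
example, `V = 1` and `u n = 1/2 + (1/2)^(n+1)` satisfy the first inequality with equality.
-/

namespace DelayDifference

variable (a h φ : ℝ → ℝ)

/-- `approx n` agrees with the solution on `{t | ⌊t⌋ ≤ n}`. -/
noncomputable def approx : ℕ → ℝ → ℝ
  | 0 => φ
  | n + 1 => fun t =>
      if ⌊t⌋ ≤ n then approx n t
      else approx n (t - 1) - a (t - 1) * approx n (h (t - 1))

noncomputable def solution (t : ℝ) : ℝ := approx a h φ ⌊t⌋.toNat t

variable {a h φ}

lemma approx_succ_of_floor_le {n : ℕ} {t : ℝ} (ht : ⌊t⌋ ≤ n) :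
    approx a h φ (n + 1) t = approx a h φ n t := by
  simp [approx, ht]

lemma approx_succ_of_lt_floor {n : ℕ} {t : ℝ} (ht : (n : ℤ) < ⌊t⌋) :
    approx a h φ (n + 1) t =
      approx a h φ n (t - 1) - a (t - 1) * approx a h φ n (h (t - 1)) := by
  simp [approx, ht.not_ge]

lemma approx_eq_of_le {m n : ℕ} (hmn : m ≤ n) {t : ℝ} (ht : ⌊t⌋ ≤ m) :
    approx a h φ n t = approx a h φ m t := by
  induction n, hmn using Nat.le_induction with
  | base => rfl
  | succ n hmn ih => rw [approx_succ_of_floor_le (by omega), ih]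

lemma approx_eq_solution {n : ℕ} {t : ℝ} (ht : ⌊t⌋ ≤ n) :
    approx a h φ n t = solution a h φ t :=
  approx_eq_of_le (by omega) (Int.self_le_toNat ⌊t⌋)

lemma solution_of_lt_one {t : ℝ} (ht : t < 1) : solution a h φ t = φ t := by
  rw [← approx_eq_solution (n := 0) (by rw [Int.floor_le_iff]; simpa using ht)]
  rfl

lemma solution_add_one {t : ℝ} (ht : 0 ≤ t) (hht : ⌊h t⌋ ≤ ⌊t⌋) :
    solution a h φ (t + 1) = solution a h φ t - a t * solution a h φ (h t) := by
  obtain ⟨n, hn⟩ := Int.eq_ofNat_of_zero_le (Int.floor_nonneg.2 ht)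
  have hfloor : ⌊t + 1⌋.toNat = n + 1 := by rw [Int.floor_add_one]; omega
  have hstep : (n : ℤ) < ⌊t + 1⌋ := by rw [Int.floor_add_one]; omega
  rw [solution, hfloor, approx_succ_of_lt_floor hstep, add_sub_cancel_right,
    approx_eq_solution hn.le, approx_eq_solution (hn ▸ hht)]

theorem solution_mem_Icc {u V : ℤ → ℝ} (hφ : ∀ t < 1, u ⌊t⌋ ≤ φ t ∧ φ t ≤ V ⌊t⌋)
    (ha : ∀ t, 0 ≤ t → 0 ≤ a t) (hh : ∀ t, 0 ≤ t → ⌊h t⌋ ≤ ⌊t⌋)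
    (hu : ∀ t, 0 ≤ t → u (⌊t⌋ + 1) ≤ u ⌊t⌋ - a t * V ⌊h t⌋)
    (hV : ∀ t, 0 ≤ t → V ⌊t⌋ - a t * u ⌊h t⌋ ≤ V (⌊t⌋ + 1)) (t : ℝ) :
    u ⌊t⌋ ≤ solution a h φ t ∧ solution a h φ t ≤ V ⌊t⌋ := by
  suffices ∀ n : ℕ, ∀ t : ℝ, ⌊t⌋ ≤ n → u ⌊t⌋ ≤ solution a h φ t ∧ solution a h φ t ≤ V ⌊t⌋ from
    this _ t (Int.self_le_toNat ⌊t⌋)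
  intro n
  induction n with
  | zero =>
    intro t ht
    rw [solution_of_lt_one (by simpa [Int.floor_le_iff] using ht)]
    exact hφ t (by simpa [Int.floor_le_iff] using ht)
  | succ n ih =>
    intro t ht
    rcases le_or_gt ⌊t⌋ n with htn | htn
    · exact ih t htn
    obtain ⟨s, rfl⟩ : ∃ s, t = s + 1 := ⟨t - 1, by ring⟩
    rw [Int.floor_add_one] at ht htn
    have hs : 0 ≤ s := by rw [← Int.floor_nonneg]; omega
    have hsn : ⌊s⌋ ≤ n := by push_cast at ht; omega
    obtain ⟨hxl, hxu⟩ := ih s hsn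
    obtain ⟨hyl, hyu⟩ := ih (h s) ((hh s hs).trans hsn)
    have has := ha s hs
    rw [solution_add_one hs (hh s hs), Int.floor_add_one]
    constructor
    · calc u (⌊s⌋ + 1) ≤ u ⌊s⌋ - a s * V ⌊h s⌋ := hu s hs
        _ ≤ _ := by gcongr
    · calc _ ≤ V ⌊s⌋ - a s * u ⌊h s⌋ := by gcongr
        _ ≤ V (⌊s⌋ + 1) := hV s hs

end DelayDifference

/-- `Int.toNat` makes this `1` for `n ≤ 0`. -/
noncomputable def lowerSeq (n : ℤ) : ℝ := 0.5 + 0.5 ^ (n.toNat + 1)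

lemma lowerSeq_pos (n : ℤ) : 0 < lowerSeq n := by
  unfold lowerSeq; positivity

lemma lowerSeq_of_nonpos {n : ℤ} (hn : n ≤ 0) : lowerSeq n = 1 := by
  norm_num [lowerSeq, Int.toNat_eq_zero.2 hn]

lemma lowerSeq_succ {n : ℤ} (hn : 0 ≤ n) : lowerSeq (n + 1) = lowerSeq n - 0.5 ^ (n + 2) := by
  lift n to ℕ using hn
  have h2 : (n : ℤ) + 2 = ((n + 2 : ℕ) : ℤ) := by push_cast; ring
  rw [lowerSeq, lowerSeq, h2, zpow_natCast, ← Nat.cast_add_one, Int.toNat_natCast,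
    Int.toNat_natCast]
  ring

lemma floor_floor_sub_cos_le (t : ℝ) : ⌊(⌊t⌋ : ℝ) - 1 - 0.8 * Real.cos t⌋ ≤ ⌊t⌋ := by
  rw [Int.floor_le_iff]
  linarith [Real.neg_one_le_cos t]

/-- Example 3: the equation
`x(t+1) - x(t) + 0.5^(⌊t⌋+2)·x(⌊t⌋ - 1 - 0.8·cos t) = 0` has a positive
solution sandwiched between `u(n) = 0.5 + 0.5^(n+1)` and `V(n) = 1` on each
interval `[n, n+1)`, `n ≥ 0`. -/
theorem stmt_9 :
    ∃ x : ℝ → ℝ,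
      (∀ t : ℝ, 0 ≤ t →
        x (t + 1) - x t +
          (0.5 : ℝ) ^ (⌊t⌋ + 2) * x ((⌊t⌋ : ℝ) - 1 - 0.8 * Real.cos t) = 0) ∧
      (∀ t : ℝ, 0 < x t) ∧
      (∀ n : ℕ, ∀ t ∈ Set.Ico (n : ℝ) ((n : ℝ) + 1),
        0.5 + (0.5 : ℝ) ^ (n + 1) ≤ x t ∧ x t ≤ 1) := by
  open DelayDifference in
  set a : ℝ → ℝ := fun t => (0.5 : ℝ) ^ (⌊t⌋ + 2)
  set h : ℝ → ℝ := fun t => (⌊t⌋ : ℝ) - 1 - 0.8 * Real.cos t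
  have hbounds := solution_mem_Icc (a := a) (h := h) (φ := 1) (u := lowerSeq) (V := 1)
    (fun t ht => by simp [lowerSeq_of_nonpos (Int.floor_le_iff.2 (by simpa using ht) : ⌊t⌋ ≤ 0)])
    (fun t _ => by positivity) (fun t _ => floor_floor_sub_cos_le t)
    (fun t ht => by rw [lowerSeq_succ (Int.floor_nonneg.2 ht), Pi.one_apply, mul_one])
    (fun t _ => by simp only [Pi.one_apply, sub_le_self_iff]; exact mul_nonneg (by positivity) (lowerSeq_pos _).le)
  refine ⟨solution a h 1, fun t ht => ?_, fun t => (lowerSeq_pos _).trans_le (hbounds t).1,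
    fun n t ht => ?_⟩
  · rw [solution_add_one ht (floor_floor_sub_cos_le t)]; ring
  · have : ⌊t⌋ = n := Int.floor_eq_iff.2 ⟨by simpa using ht.1, by simpa using ht.2⟩
    simpa [this, lowerSeq] using hbounds t
end

section
/- Let x be a positive non-increasing solution of x(t+1) - x(t) + Σ_{k=1}^m a_k(t)·x(h_k(t)) = 0 with a_k(t) ≥ 0 and h_k(t) ≤ t. Then for any real 0 ≤ s < t, x(t) ≤ x(s)·Π_{j∈ℕ, t-j ≥ s} (1 - Σ_{k=1}^m a_k(t-j)), the product taken over the points t - j with j = 1,2,… and t - j ≥ s (an empty product equals 1). -/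
/-!
Monotonicity of `x` and `h k t ≤ t` give `x (h k t) ≥ x t`, so the equation yields the one-step
bound `x (u + 1) ≤ x u * (1 - ∑ k, a k u)`, whose factor is positive because `x` is. Chaining this
bound from `t` down the grid `t - 1, t - 2, …, t - ⌊t - s⌋` and finishing with `x (t - ⌊t - s⌋) ≤ x s`
gives the estimate.
-/

open Finset

section OneStep

variable {x g : ℝ → ℝ}

theorem le_mul_prod_Icc_of_step (hstep : ∀ u, 0 ≤ u → x (u + 1) ≤ x u * g u)
    (hg : ∀ u, 0 ≤ u → 0 ≤ g u) (n : ℕ) {t : ℝ} (hn : (n : ℝ) ≤ t) :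
    x t ≤ x (t - n) * ∏ j ∈ Icc 1 n, g (t - j) := by
  induction n with
  | zero => simp
  | succ n ih =>
    push_cast at hn
    have hprod : 0 ≤ ∏ j ∈ Icc 1 n, g (t - j) :=
      prod_nonneg fun j hj => hg _ <| by
        have : (j : ℝ) ≤ n := by exact_mod_cast (mem_Icc.mp hj).2
        linarith
    have hlast : x (t - n) ≤ x (t - n - 1) * g (t - n - 1) := by
      simpa using hstep (t - n - 1) (by linarith)
    calc x t ≤ x (t - n) * ∏ j ∈ Icc 1 n, g (t - j) := ih (by linarith)
      _ ≤ x (t - n - 1) * g (t - n - 1) * ∏ j ∈ Icc 1 n, g (t - j) :=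
        mul_le_mul_of_nonneg_right hlast hprod
      _ = x (t - ↑(n + 1)) * ∏ j ∈ Icc 1 (n + 1), g (t - j) := by
        rw [prod_Icc_succ_top (by omega)]
        push_cast [sub_add_eq_sub_sub]
        ring

theorem le_mul_prod_Icc_floor_of_step (hstep : ∀ u, 0 ≤ u → x (u + 1) ≤ x u * g u)
    (hg : ∀ u, 0 ≤ u → 0 ≤ g u) (hx : Antitone x) {s t : ℝ} (hs : 0 ≤ s) (hst : s ≤ t) :
    x t ≤ x s * ∏ j ∈ Icc 1 ⌊t - s⌋₊, g (t - j) := by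
  have hn : (⌊t - s⌋₊ : ℝ) ≤ t - s := Nat.floor_le (by linarith)
  calc x t ≤ x (t - ⌊t - s⌋₊) * ∏ j ∈ Icc 1 ⌊t - s⌋₊, g (t - j) :=
        le_mul_prod_Icc_of_step hstep hg _ (by linarith)
    _ ≤ x s * ∏ j ∈ Icc 1 ⌊t - s⌋₊, g (t - j) := by
        refine mul_le_mul_of_nonneg_right (hx (by linarith)) (prod_nonneg fun j hj => hg _ ?_)
        have : (j : ℝ) ≤ ⌊t - s⌋₊ := by exact_mod_cast (mem_Icc.mp hj).2
        linarith

end OneStep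

theorem filter_range_ceil_eq_Icc_floor {s t : ℝ} (hst : s ≤ t) :
    (range (⌈t - s⌉₊ + 1)).filter (fun j : ℕ => 1 ≤ j ∧ s ≤ t - (j : ℝ)) = Icc 1 ⌊t - s⌋₊ := by
  ext j
  simp only [mem_filter, mem_range, mem_Icc]
  constructor
  · rintro ⟨-, hj, hjs⟩
    exact ⟨hj, Nat.le_floor (by linarith)⟩
  · rintro ⟨hj, hjs⟩
    have hjt : (j : ℝ) ≤ t - s := (Nat.le_floor_iff (by linarith)).mp hjs
    exact ⟨Nat.lt_succ_of_le (hjs.trans (Nat.floor_le_ceil _)), hj, by linarith⟩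

theorem step_le_of_delay_eq {ι : Type*} [Fintype ι] {a h : ι → ℝ → ℝ} {x : ℝ → ℝ} {t : ℝ}
    (ha : ∀ k, 0 ≤ a k t) (hht : ∀ k, h k t ≤ t) (hx : Antitone x)
    (heq : x (t + 1) - x t + ∑ k, a k t * x (h k t) = 0) :
    x (t + 1) ≤ x t * (1 - ∑ k, a k t) := by
  have hdelay : (∑ k, a k t) * x t ≤ ∑ k, a k t * x (h k t) := by
    rw [sum_mul]
    exact sum_le_sum fun k _ => mul_le_mul_of_nonneg_left (hx (hht k)) (ha k)
  linarith

/-- Lemma 3 (backward grid): second Grönwall–Bellman type estimate. If `x`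
is a positive non-increasing solution of
`x(t+1) - x(t) + Σ_k a_k(t)·x(h_k(t)) = 0`, then for `0 ≤ s < t`,
`x(t) ≤ x(s)·∏_{j ∈ ℕ, t-j ≥ s} (1 - Σ_k a_k(t-j))`. -/
theorem stmt_11 (m : ℕ) (a h : Fin m → ℝ → ℝ) (x : ℝ → ℝ)
    (ha : ∀ k t, 0 ≤ a k t) (hht : ∀ k (t : ℝ), h k t ≤ t)
    (hpos : ∀ t : ℝ, 0 < x t)
    (hmono : ∀ s t : ℝ, s ≤ t → x t ≤ x s)
    (heq : ∀ t : ℝ, 0 ≤ t → x (t + 1) - x t + ∑ k, a k t * x (h k t) = 0) :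
    ∀ s t : ℝ, 0 ≤ s → s < t →
      x t ≤ x s *
        ∏ j ∈ (Finset.range (⌈t - s⌉₊ + 1)).filter
            (fun j : ℕ => 1 ≤ j ∧ s ≤ t - (j : ℝ)),
          (1 - ∑ k, a k (t - (j : ℝ))) := by
  intro s t hs hst
  have hstep (u : ℝ) (hu : 0 ≤ u) : x (u + 1) ≤ x u * (1 - ∑ k, a k u) :=
    step_le_of_delay_eq (ha · u) (hht · u) hmono (heq u hu)
  have hfactor (u : ℝ) (hu : 0 ≤ u) : 0 ≤ 1 - ∑ k, a k u :=
    (pos_of_mul_pos_right ((hpos _).trans_le (hstep u hu)) (hpos u).le).le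
  rw [filter_range_ceil_eq_Icc_floor hst.le]
  exact le_mul_prod_Icc_floor_of_step hstep hfactor hmono hs hst.le
end

section
/- The equation x(t+1) - x(t) + (1/2 - {t}/2)·x(t) = 0 has no positive non-increasing solution. Precisely: if x : [0,∞) → ℝ is positive and satisfies x(t+1) = (1/2 + {t}/2)·x(t) for all t ≥ 0, then x is not non-increasing; in fact for α = x(0)/x(1/2) and any integer n > ln α / ln(3/2), one has x(n + 1/2) > x(n). -/
/-! Along each orbit `t, t + 1, t + 2, …` the fractional part is constant, so the equation is a
geometric recursion: `x n = (1/2)^n x 0` and `x (n + 1/2) = (3/4)^n x (1/2)`. The second sequence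
decays more slowly, by the factor `(3/2)^n`, which exceeds `x 0 / x (1/2)` once
`n > log (x 0 / x (1/2)) / log (3/2)`. -/

open Real

theorem apply_add_natCast_of_fract_recursion {x : ℝ → ℝ}
    (heq : ∀ t : ℝ, 0 ≤ t → x (t + 1) = (1 / 2 + Int.fract t / 2) * x t)
    {t : ℝ} (ht : 0 ≤ t) (n : ℕ) :
    x (t + n) = (1 / 2 + Int.fract t / 2) ^ n * x t := by
  induction n with
  | zero => simp
  | succ n ih =>
    have hstep := heq (t + n) (by positivity)
    rw [Int.fract_add_natCast, ih] at hstep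
    rw [Nat.cast_succ, ← add_assoc, hstep, pow_succ]
    ring

/-- Example 4 (second part): the equation
`x(t+1) = (1/2 + {t}/2)·x(t)` has no positive non-increasing solution:
any positive solution satisfies `x(n + 1/2) > x(n)` for every integer
`n > ln(x(0)/x(1/2)) / ln(3/2)`; in particular `x` is not non-increasing. -/
theorem stmt_15 (x : ℝ → ℝ)
    (hpos : ∀ t : ℝ, 0 ≤ t → 0 < x t)
    (heq : ∀ t : ℝ, 0 ≤ t → x (t + 1) = (1 / 2 + Int.fract t / 2) * x t) :
    (∀ n : ℕ, Real.log (x 0 / x (1 / 2)) / Real.log (3 / 2) < (n : ℝ) →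
      x n < x ((n : ℝ) + 1 / 2)) ∧
    ¬ (∀ s t : ℝ, 0 ≤ s → s ≤ t → x t ≤ x s) := by
  have hint (n : ℕ) : x n = (1 / 2) ^ n * x 0 := by
    simpa using apply_add_natCast_of_fract_recursion heq le_rfl n
  have hhalf (n : ℕ) : x (n + 1 / 2) = (3 / 4) ^ n * x (1 / 2) := by
    have hfract : Int.fract (1 / 2 : ℝ) = 1 / 2 := Int.fract_eq_self.mpr (by norm_num)
    rw [add_comm, apply_add_natCast_of_fract_recursion heq (by norm_num) n, hfract]
    norm_num
  have hgrowth (n : ℕ) (hn : log (x 0 / x (1 / 2)) / log (3 / 2) < n) :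
      x n < x (n + 1 / 2) := by
    have hratio : x 0 / x (1 / 2) < (3 / 2) ^ n :=
      lt_pow_of_log_lt (by norm_num) ((div_lt_iff₀ (log_pos (by norm_num))).mp hn)
    rw [div_lt_iff₀ (hpos _ (by norm_num))] at hratio
    calc x n = (1 / 2) ^ n * x 0 := hint n
      _ < (1 / 2) ^ n * ((3 / 2) ^ n * x (1 / 2)) := by gcongr
      _ = x (n + 1 / 2) := by rw [hhalf, ← mul_assoc, ← mul_pow]; norm_num
  refine ⟨hgrowth, fun hanti => ?_⟩
  obtain ⟨n, hn⟩ := exists_nat_gt (log (x 0 / x (1 / 2)) / log (3 / 2))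
  exact (hgrowth n hn).not_ge (hanti n (n + 1 / 2) n.cast_nonneg (by linarith))
end
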